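/- arXiv:1502.05925 — 4 statements merged into one kernel-verified Lean document; each statement's English description precedes it below -/
import Mathlib

section
/- The binary threshold-Pairs function F_α(G) = max(max(n¹_G - α, 0) · max(n²_G - α, 0) - α², 0) is supermodular: for R ⊆ G and an example j ∉ G, F_α(G ∪ {j}) - F_α(G) ≥ F_α(R ∪ {j}) - F_α(R). -/
/-- Binary threshold-Pairs impurity on class counts `a`, `b` with threshold `α`. -/
noncomputable def thresholdPairs (α : ℝ) (a b : ℕ) : ℝ :=
  max (max ((a : ℝ) - α) 0 * max ((b : ℝ) - α) 0 - α ^ 2) 0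

private lemma relu_key (uR uR' uG uG' : ℝ) (h1 : uR ≤ uR') (h2 : uG ≤ uG') (h4 : uR' ≤ uG')
    (h5 : uR' - uR ≤ uG' - uG) :
    max uR' 0 - max uR 0 ≤ max uG' 0 - max uG 0 := by
  simp only [max_def]
  split_ifs <;> linarith

private lemma pairs_aux (α : ℝ) (aR bR aG bG : ℕ) (h1 : aR ≤ aG) (h2 : bR ≤ bG) :
    thresholdPairs α (aR + 1) bR - thresholdPairs α aR bR ≤
      thresholdPairs α (aG + 1) bG - thresholdPairs α aG bG := by
  have ha : (aR : ℝ) ≤ aG := by exact_mod_cast h1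
  have hb : (bR : ℝ) ≤ bG := by exact_mod_cast h2
  set pR := max ((aR : ℝ) - α) 0 with hpR
  set pR' := max ((aR : ℝ) + 1 - α) 0 with hpR'
  set pG := max ((aG : ℝ) - α) 0 with hpG
  set pG' := max ((aG : ℝ) + 1 - α) 0 with hpG'
  set qR := max ((bR : ℝ) - α) 0 with hqR
  set qG := max ((bG : ℝ) - α) 0 with hqG
  have hqR0 : 0 ≤ qR := le_max_right _ _
  have hqG0 : 0 ≤ qG := le_max_right _ _
  have hq : qR ≤ qG := max_le_max (by linarith) le_rfl
  have hpmR : pR ≤ pR' := max_le_max (by linarith) le_rfl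
  have hpmG : pG ≤ pG' := max_le_max (by linarith) le_rfl
  have hp' : pR' ≤ pG' := max_le_max (by linarith) le_rfl
  have hinc : pR' - pR ≤ pG' - pG := by
    simp only [hpR, hpR', hpG, hpG', max_def]
    split_ifs <;> linarith
  have key : max (pR' * qR - α ^ 2) 0 - max (pR * qR - α ^ 2) 0 ≤
      max (pG' * qG - α ^ 2) 0 - max (pG * qG - α ^ 2) 0 := by
    have hpR'0 : 0 ≤ pR' := le_max_right _ _
    have hpG'0 : 0 ≤ pG' := le_max_right _ _
    apply relu_key
    · nlinarith
    · nlinarith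
    · nlinarith
    · nlinarith [mul_le_mul hinc hq hqR0 (by linarith : (0:ℝ) ≤ pG' - pG)]
  have cast1 : ((aR + 1 : ℕ) : ℝ) = (aR : ℝ) + 1 := by push_cast; ring
  have cast2 : ((aG + 1 : ℕ) : ℝ) = (aG : ℝ) + 1 := by push_cast; ring
  simpa [thresholdPairs, cast1, cast2, hpR, hpR', hpG, hpG', hqR, hqG] using key

private lemma thresholdPairs_comm (α : ℝ) (a b : ℕ) :
    thresholdPairs α a b = thresholdPairs α b a := by
  simp [thresholdPairs, mul_comm]

theorem thresholdPairs_supermodular (α : ℝ) (hα : 0 ≤ α)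
    (n1R n2R n1G n2G : ℕ) (h1 : n1R ≤ n1G) (h2 : n2R ≤ n2G) :
    (thresholdPairs α (n1R + 1) n2R - thresholdPairs α n1R n2R ≤
      thresholdPairs α (n1G + 1) n2G - thresholdPairs α n1G n2G) ∧
    (thresholdPairs α n1R (n2R + 1) - thresholdPairs α n1R n2R ≤
      thresholdPairs α n1G (n2G + 1) - thresholdPairs α n1G n2G) := by
  constructor
  · exact pairs_aux α n1R n2R n1G n2G h1 h2
  · rw [thresholdPairs_comm α n1R (n2R + 1), thresholdPairs_comm α n1R n2R,
      thresholdPairs_comm α n1G (n2G + 1), thresholdPairs_comm α n1G n2G]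
    exact pairs_aux α n2R n1R n2G n1G h2 h1
end

section
/- The multiclass threshold-Pairs function F_α(G) = Σ_{i≠j} max(max(nⁱ_G - α,0)·max(nʲ_G - α,0) - α², 0) is monotone and supermodular, and F_α(G) = 0 whenever all examples in G belong to the same class. -/
/-- Multiclass threshold-Pairs impurity on a class-count vector `n : Fin k → ℕ`
with threshold `α`, summing over ordered pairs of distinct classes. -/
noncomputable def multiThresholdPairs {k : ℕ} (α : ℝ) (n : Fin k → ℕ) : ℝ :=
  ∑ i : Fin k, ∑ j ∈ Finset.univ \ {i},
    max (max ((n i : ℝ) - α) 0 * max ((n j : ℝ) - α) 0 - α ^ 2) 0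

/-! Each summand is `φ (u x * u y)` with the ramps `u t = max (t - α) 0` and
`φ s = max (s - α²) 0`, both convex, nondecreasing and nonnegative. A product of two such
ramps has increasing differences, and composing with `φ` preserves this; summing over the
pairs gives monotonicity and supermodularity, while a pure class makes a ramp vanish in
every pair. -/

lemma max_sub_zero_increment_mono {c s S δ Δ : ℝ} (hs : s ≤ S) (hδ : 0 ≤ δ) (hδΔ : δ ≤ Δ) :
    max (s + δ - c) 0 - max (s - c) 0 ≤ max (S + Δ - c) 0 - max (S - c) 0 := by
  simp only [max_def]
  split_ifs <;> linarith

noncomputable def thresholdPairTerm (α x y : ℝ) : ℝ :=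
  max (max (x - α) 0 * max (y - α) 0 - α ^ 2) 0

namespace thresholdPairTerm

variable {α x y X Y : ℝ}

lemma comm (α x y : ℝ) : thresholdPairTerm α x y = thresholdPairTerm α y x := by
  rw [thresholdPairTerm, thresholdPairTerm, mul_comm]

lemma mono (hx : x ≤ X) (hy : y ≤ Y) : thresholdPairTerm α x y ≤ thresholdPairTerm α X Y := by
  unfold thresholdPairTerm
  gcongr

lemma add_left_sub_mono {a : ℝ} (ha : 0 ≤ a) (hx : x ≤ X) (hy : y ≤ Y) :
    thresholdPairTerm α (x + a) y - thresholdPairTerm α x y ≤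
      thresholdPairTerm α (X + a) Y - thresholdPairTerm α X Y := by
  unfold thresholdPairTerm
  set ux := max (x - α) 0
  set uX := max (X - α) 0
  set uy := max (y - α) 0
  set uY := max (Y - α) 0
  have hux : 0 ≤ ux := le_max_right _ _
  have huy : 0 ≤ uy := le_max_right _ _
  have huxX : ux ≤ uX := max_le_max (by linarith) le_rfl
  have huyY : uy ≤ uY := max_le_max (by linarith) le_rfl
  have hdx : 0 ≤ max (x + a - α) 0 - ux := sub_nonneg.mpr (max_le_max (by linarith) le_rfl)
  have hdxX : max (x + a - α) 0 - ux ≤ max (X + a - α) 0 - uX :=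
    max_sub_zero_increment_mono hx ha le_rfl
  have key := max_sub_zero_increment_mono (c := α ^ 2)
    (mul_le_mul huxX huyY huy (hux.trans huxX)) (mul_nonneg hdx huy)
    (mul_le_mul hdxX huyY huy (hdx.trans hdxX))
  ring_nf at key ⊢
  exact key

lemma add_sub_mono {a b : ℝ} (ha : 0 ≤ a) (hb : 0 ≤ b) (hx : x ≤ X) (hy : y ≤ Y) :
    thresholdPairTerm α (x + a) (y + b) - thresholdPairTerm α x y ≤
      thresholdPairTerm α (X + a) (Y + b) - thresholdPairTerm α X Y := by
  have hright := add_left_sub_mono (α := α) hb hy (add_le_add_left hx a)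
  rw [comm α (y + b), comm α y, comm α (Y + b), comm α Y] at hright
  linarith [add_left_sub_mono (α := α) ha hx hy]

lemma zero_left (hα : 0 ≤ α) (y : ℝ) : thresholdPairTerm α 0 y = 0 := by
  have hramp : max (0 - α) 0 = 0 := max_eq_right (by linarith)
  rw [thresholdPairTerm, hramp, zero_mul]
  exact max_eq_right (by nlinarith)

lemma zero_right (hα : 0 ≤ α) (x : ℝ) : thresholdPairTerm α x 0 = 0 := by
  rw [comm, zero_left hα]

end thresholdPairTerm

lemma multiThresholdPairs_eq_sum {k : ℕ} (α : ℝ) (n : Fin k → ℕ) :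
    multiThresholdPairs α n =
      ∑ i : Fin k, ∑ j ∈ Finset.univ \ {i}, thresholdPairTerm α (n i) (n j) := rfl

lemma natCast_ite_add_one {R : Type*} [AddMonoidWithOne R] (p : Prop) [Decidable p] (m : ℕ) :
    ((if p then m + 1 else m : ℕ) : R) = m + if p then 1 else 0 := by
  split_ifs <;> simp

theorem multiThresholdPairs_admissible {k : ℕ} (α : ℝ) (hα : 0 ≤ α) :
    -- monotone
    (∀ nR nG : Fin k → ℕ, (∀ i, nR i ≤ nG i) →
      multiThresholdPairs α nR ≤ multiThresholdPairs α nG) ∧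
    -- supermodular (adding one example of class j)
    (∀ nR nG : Fin k → ℕ, (∀ i, nR i ≤ nG i) → ∀ j : Fin k,
      multiThresholdPairs α (fun i => if i = j then nR i + 1 else nR i) -
          multiThresholdPairs α nR ≤
        multiThresholdPairs α (fun i => if i = j then nG i + 1 else nG i) -
          multiThresholdPairs α nG) ∧
    -- purity: zero when all examples belong to one class
    (∀ n : Fin k → ℕ, ∀ c : Fin k, (∀ i, i ≠ c → n i = 0) →
      multiThresholdPairs α n = 0) := by
  have hcast {nR nG : Fin k → ℕ} (h : ∀ i, nR i ≤ nG i) (i : Fin k) : (nR i : ℝ) ≤ nG i := by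
    exact_mod_cast h i
  refine ⟨fun nR nG h => ?_, fun nR nG h j => ?_, fun n c hc => ?_⟩
  · simp only [multiThresholdPairs_eq_sum]
    exact Finset.sum_le_sum fun i _ => Finset.sum_le_sum fun j _ =>
      thresholdPairTerm.mono (hcast h i) (hcast h j)
  · simp only [multiThresholdPairs_eq_sum, natCast_ite_add_one, ← Finset.sum_sub_distrib]
    exact Finset.sum_le_sum fun i _ => Finset.sum_le_sum fun j' _ =>
      thresholdPairTerm.add_sub_mono (by positivity) (by positivity) (hcast h i) (hcast h j')
  · rw [multiThresholdPairs_eq_sum]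
    refine Finset.sum_eq_zero fun i _ => Finset.sum_eq_zero fun j hj => ?_
    have hji : j ≠ i := (Finset.mem_sdiff.mp hj).2 ∘ Finset.mem_singleton.mpr
    by_cases hi : i = c
    · rw [hc j (hi ▸ hji), Nat.cast_zero, thresholdPairTerm.zero_right hα]
    · rw [hc i hi, Nat.cast_zero, thresholdPairTerm.zero_left hα]
end

section
/- For each integer l ≥ 2, the Powers function F(n) = (Σ_i n_i)^l - Σ_i n_i^l is supermodular on ℕ^k: if n ≤ m componentwise and e_j is the j-th standard basis vector, then F(m + e_j) - F(m) ≥ F(n + e_j) - F(n). -/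
/-- Powers impurity function on a count vector. -/
def powersImpurity {k : ℕ} (l : ℕ) (n : Fin k → ℕ) : ℤ :=
  ((∑ i : Fin k, n i : ℕ) : ℤ) ^ l - ∑ i : Fin k, (n i : ℤ) ^ l

private def Dfun (l x : ℕ) : ℤ := ((x : ℤ) + 1) ^ l - (x : ℤ) ^ l

private lemma Dfun_rec (l x : ℕ) :
    Dfun (l + 1) x = ((x : ℤ) + 1) * Dfun l x + (x : ℤ) ^ l := by
  simp only [Dfun]; ring

private lemma Dfun_nonneg (l x : ℕ) : 0 ≤ Dfun l x := by
  have : (x : ℤ) ^ l ≤ ((x : ℤ) + 1) ^ l :=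
    pow_le_pow_left₀ (by positivity) (by linarith) l
  simpa [Dfun] using this

private lemma Dfun_mono (l : ℕ) : ∀ {x y : ℕ}, x ≤ y → Dfun l x ≤ Dfun l y := by
  induction l with
  | zero => intro x y _; simp [Dfun]
  | succ l ih =>
    intro x y hxy
    rw [Dfun_rec, Dfun_rec]
    have hxy' : (x : ℤ) ≤ (y : ℤ) := by exact_mod_cast hxy
    have h1 : ((x : ℤ) + 1) * Dfun l x ≤ ((y : ℤ) + 1) * Dfun l y :=
      mul_le_mul (by linarith) (ih hxy) (Dfun_nonneg l x) (by positivity)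
    have h2 : (x : ℤ) ^ l ≤ (y : ℤ) ^ l :=
      pow_le_pow_left₀ (by positivity) hxy' l
    linarith

private lemma Dfun2_mono (l : ℕ) : ∀ {x y : ℕ}, x ≤ y →
    Dfun l (x + 1) - Dfun l x ≤ Dfun l (y + 1) - Dfun l y := by
  induction l with
  | zero => intro x y _; simp [Dfun]
  | succ l ih =>
    intro x y hxy
    have idx : ∀ z : ℕ, Dfun (l + 1) (z + 1) - Dfun (l + 1) z
        = ((z : ℤ) + 1) * (Dfun l (z + 1) - Dfun l z) + Dfun l (z + 1) + Dfun l z := by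
      intro z
      rw [Dfun_rec, Dfun_rec]
      have : Dfun l z = ((z : ℤ) + 1) ^ l - (z : ℤ) ^ l := rfl
      push_cast
      linarith [this]
    rw [idx, idx]
    have hxy' : (x : ℤ) ≤ (y : ℤ) := by exact_mod_cast hxy
    have h0 : 0 ≤ Dfun l (x + 1) - Dfun l x :=
      sub_nonneg.mpr (Dfun_mono l (Nat.le_succ x))
    have h1 : ((x : ℤ) + 1) * (Dfun l (x + 1) - Dfun l x)
        ≤ ((y : ℤ) + 1) * (Dfun l (y + 1) - Dfun l y) :=
      mul_le_mul (by linarith) (ih hxy) h0 (by positivity)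
    have h2 : Dfun l (x + 1) ≤ Dfun l (y + 1) := Dfun_mono l (by omega)
    have h3 : Dfun l x ≤ Dfun l y := Dfun_mono l hxy
    linarith

private lemma Dfun_step (l : ℕ) (a : ℕ) : ∀ {x y : ℕ}, x ≤ y →
    Dfun l (x + a) - Dfun l x ≤ Dfun l (y + a) - Dfun l y := by
  induction a with
  | zero => intro x y _; simp
  | succ a ih =>
    intro x y hxy
    have h1 := ih hxy
    have h2 := Dfun2_mono l (show x + a ≤ y + a by omega)
    have e1 : x + (a + 1) = (x + a) + 1 := by omega
    have e2 : y + (a + 1) = (y + a) + 1 := by omega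
    rw [e1, e2]
    linarith

private lemma Dfun_main (l : ℕ) {N M a b : ℕ} (hNM : N ≤ M) (hab : a ≤ b) :
    Dfun l (N + a) - Dfun l N ≤ Dfun l (M + b) - Dfun l M := by
  have h1 := Dfun_step l a hNM
  have h2 : Dfun l (M + a) ≤ Dfun l (M + b) := Dfun_mono l (by omega)
  linarith

private lemma powersImpurity_diff {k : ℕ} (l : ℕ) (n : Fin k → ℕ) (j : Fin k) :
    powersImpurity l (fun i => if i = j then n i + 1 else n i) - powersImpurity l n
      = Dfun l (∑ i : Fin k, n i) - Dfun l (n j) := by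
  have hs : ∑ i : Fin k, (if i = j then n i + 1 else n i) = (∑ i : Fin k, n i) + 1 := by
    have : ∀ i, (if i = j then n i + 1 else n i) = n i + (if i = j then 1 else 0) := by
      intro i; split <;> simp
    simp [this, Finset.sum_add_distrib]
  have hp : ∑ i : Fin k, ((if i = j then n i + 1 else n i : ℕ) : ℤ) ^ l
      = (∑ i : Fin k, (n i : ℤ) ^ l) - (n j : ℤ) ^ l + ((n j : ℤ) + 1) ^ l := by
    rw [← Finset.add_sum_erase _ (fun i => ((if i = j then n i + 1 else n i : ℕ) : ℤ) ^ l)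
        (Finset.mem_univ j),
      ← Finset.add_sum_erase _ (fun i => (n i : ℤ) ^ l) (Finset.mem_univ j)]
    have he : ∀ i ∈ Finset.univ.erase j,
        ((if i = j then n i + 1 else n i : ℕ) : ℤ) ^ l = (n i : ℤ) ^ l := by
      intro i hi
      rw [if_neg (Finset.ne_of_mem_erase hi)]
    rw [Finset.sum_congr rfl he]
    simp only [if_pos rfl]
    push_cast
    ring
  simp only [powersImpurity, Dfun, hs, hp]
  push_cast
  ring

theorem powersImpurity_supermodular {k : ℕ} (l : ℕ) (hl : 2 ≤ l)
    (n m : Fin k → ℕ) (h : ∀ i, n i ≤ m i) (j : Fin k) :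
    powersImpurity l (fun i => if i = j then n i + 1 else n i) -
        powersImpurity l n ≤
      powersImpurity l (fun i => if i = j then m i + 1 else m i) -
        powersImpurity l m := by
  rw [powersImpurity_diff, powersImpurity_diff]
  have hn : ∑ i : Fin k, n i = n j + ∑ i ∈ Finset.univ.erase j, n i :=
    (Finset.add_sum_erase _ n (Finset.mem_univ j)).symm
  have hm : ∑ i : Fin k, m i = m j + ∑ i ∈ Finset.univ.erase j, m i :=
    (Finset.add_sum_erase _ m (Finset.mem_univ j)).symm
  have hab : ∑ i ∈ Finset.univ.erase j, n i ≤ ∑ i ∈ Finset.univ.erase j, m i :=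
    Finset.sum_le_sum fun i _ => h i
  rw [hn, hm]
  exact Dfun_main l (h j) hab
end

section
/- Define recursively a nonnegative real sequence satisfying, for states with impurity value a ∈ ℝ≥1, the bound Ratio(a) ≤ λ·(a - b)/a + Ratio(b) for some 1 ≤ b < a, with base case Ratio(1) ≤ 1. Then Ratio(a) ≤ λ·log(a) + 1 for all a ≥ 1. -/
theorem greedy_ratio_log_bound (lam : ℝ) (hlam : 1 ≤ lam)
    (f : ℕ → ℝ) (hbase : f 1 ≤ 1)
    (hstep : ∀ a : ℕ, 1 < a → ∃ b : ℕ, 1 ≤ b ∧ b < a ∧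
      f a ≤ lam * ((a : ℝ) - (b : ℝ)) / (a : ℝ) + f b) :
    ∀ a : ℕ, 1 ≤ a → f a ≤ lam * Real.log (a : ℝ) + 1 := by
  intro a
  induction a using Nat.strong_induction_on with
  | _ a ih =>
    intro ha
    rcases eq_or_lt_of_le ha with h1 | h1
    · simp [← h1]
      linarith [hbase]
    · obtain ⟨b, hb1, hba, hf⟩ := hstep a h1
      have ihb := ih b hba hb1
      have hapos : (0:ℝ) < a := by positivity
      have hbpos : (0:ℝ) < b := by exact_mod_cast hb1
      -- log(b/a) ≤ b/a - 1
      have hlog : Real.log ((b:ℝ)/(a:ℝ)) ≤ (b:ℝ)/(a:ℝ) - 1 :=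
        Real.log_le_sub_one_of_pos (by positivity)
      have hdiv : Real.log ((b:ℝ)/(a:ℝ)) = Real.log b - Real.log a :=
        Real.log_div (ne_of_gt hbpos) (ne_of_gt hapos)
      have key : ((a:ℝ) - (b:ℝ)) / (a:ℝ) ≤ Real.log a - Real.log b := by
        rw [hdiv] at hlog
        have : ((a:ℝ) - (b:ℝ)) / (a:ℝ) = 1 - (b:ℝ)/(a:ℝ) := by
          field_simp
        linarith
      have hlam0 : (0:ℝ) ≤ lam := by linarith
      calc f a ≤ lam * ((a : ℝ) - (b : ℝ)) / (a : ℝ) + f b := hf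
        _ ≤ lam * (Real.log a - Real.log b) + (lam * Real.log b + 1) := by
            rw [mul_div_assoc]
            gcongr
        _ = lam * Real.log a + 1 := by ring
end
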